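/- Let I ⊆ ℝ be a nonempty open interval, let a, b, A, B, c₂ ∈ ℝ and c₁ ≠ 0, with c₁·t + c₂ ≠ 0 for all t ∈ I. Define F : ℝ × ℝ → ℝ by F(t, x) = e^{a·x + b} · ( (3·A / (2·c₁)) · cbrt((c₁t + c₂)²) + B ). Then for all t ∈ I and all x ∈ ℝ: ∂²F/∂t² (t, x) + (c₁ / (3(c₁t + c₂))) · ∂F/∂t (t, x) = 0. -/

import Mathlib

/-- The real cube root function (the inverse of `x ↦ x³` on `ℝ`). -/
noncomputable def cbrt (x : ℝ) : ℝ := Real.sign x * |x| ^ ((1 : ℝ) / 3)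

/-- Partial derivative of `F : ℝ × ℝ → ℝ` in the first (time) variable. -/
noncomputable def pdt (F : ℝ × ℝ → ℝ) (t x : ℝ) : ℝ := deriv (fun s => F (s, x)) t

/-- Second partial derivative `∂²F/∂t²`. -/
noncomputable def pdtt (F : ℝ × ℝ → ℝ) (t x : ℝ) : ℝ := deriv (fun s => pdt F s x) t

lemma cbrt_sq (u : ℝ) : cbrt (u ^ 2) = (u ^ 2) ^ ((1:ℝ)/3) := by
  unfold cbrt
  rcases eq_or_ne u 0 with h | h
  · simp [h, Real.zero_rpow (by norm_num : (1:ℝ)/3 ≠ 0)]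
  · have h2 : 0 < u ^ 2 := by positivity
    rw [Real.sign_of_pos h2, abs_of_pos h2, one_mul]

lemma hasDerivAt_u (c₁ c₂ t : ℝ) : HasDerivAt (fun s => c₁ * s + c₂) c₁ t := by
  simpa using ((hasDerivAt_id t).const_mul c₁).add_const c₂

lemma key (c₁ c₂ t : ℝ) (ht : c₁ * t + c₂ ≠ 0) :
    HasDerivAt (fun s => ((c₁ * s + c₂) ^ 2) ^ ((1:ℝ)/3))
      (2 * c₁ / 3 * (c₁ * t + c₂) * ((c₁ * t + c₂) ^ 2) ^ (-(2:ℝ)/3)) t := by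
  have hu2 : HasDerivAt (fun s => (c₁ * s + c₂) ^ 2) (2 * (c₁ * t + c₂) * c₁) t := by
    simpa using (hasDerivAt_u c₁ c₂ t).fun_pow 2
  have h := (Real.hasDerivAt_rpow_const (x := (c₁*t+c₂)^2) (p := (1:ℝ)/3)
    (Or.inl (pow_ne_zero 2 ht))).comp t hu2
  refine h.congr_deriv ?_
  rw [show ((1:ℝ)/3 - 1) = -(2:ℝ)/3 by norm_num]
  ring

lemma key2 (c₁ c₂ t : ℝ) (ht : c₁ * t + c₂ ≠ 0) :
    HasDerivAt (fun s => (c₁ * s + c₂) * ((c₁ * s + c₂) ^ 2) ^ (-(2:ℝ)/3))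
      (-(c₁/3) * ((c₁ * t + c₂) ^ 2) ^ (-(2:ℝ)/3)) t := by
  have hu2 : HasDerivAt (fun s => (c₁ * s + c₂) ^ 2) (2 * (c₁ * t + c₂) * c₁) t := by
    simpa using (hasDerivAt_u c₁ c₂ t).fun_pow 2
  have hr := (Real.hasDerivAt_rpow_const (x := (c₁*t+c₂)^2) (p := -(2:ℝ)/3)
    (Or.inl (pow_ne_zero 2 ht))).comp t hu2
  have h := (hasDerivAt_u c₁ c₂ t).mul hr
  simp only [Function.comp_def] at h
  refine h.congr_deriv ?_
  set v := c₁ * t + c₂ with hv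
  have hv2 : (0:ℝ) < v ^ 2 := by positivity
  have hmul : v ^ 2 * (v ^ 2) ^ (-(2:ℝ)/3 - 1) = (v ^ 2) ^ (-(2:ℝ)/3) := by
    calc v ^ 2 * (v ^ 2) ^ (-(2:ℝ)/3 - 1)
        = (v ^ 2) ^ (1:ℝ) * (v ^ 2) ^ (-(2:ℝ)/3 - 1) := by rw [Real.rpow_one]
      _ = (v ^ 2) ^ ((1:ℝ) + (-(2:ℝ)/3 - 1)) := (Real.rpow_add hv2 _ _).symm
      _ = (v ^ 2) ^ (-(2:ℝ)/3) := by norm_num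
  have expand : v * (-(2:ℝ)/3 * (v ^ 2) ^ (-(2:ℝ)/3 - 1) * (2 * v * c₁))
      = -(4*c₁/3) * (v ^ 2 * (v ^ 2) ^ (-(2:ℝ)/3 - 1)) := by ring
  rw [expand, hmul]
  ring

/-- the explicit family of Remark 4.1 (case `k = 0`) solves the
PDE of Proposition 4.1(ii). -/
theorem stmt_5 (I : Set ℝ) (hIopen : IsOpen I) (hIconn : I.OrdConnected)
    (hIne : I.Nonempty) (a b A B c₁ c₂ : ℝ) (hc₁ : c₁ ≠ 0)
    (hne : ∀ t ∈ I, c₁ * t + c₂ ≠ 0)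
    (F : ℝ × ℝ → ℝ)
    (hF : ∀ t x : ℝ, F (t, x) =
      Real.exp (a * x + b) * ((3 * A / (2 * c₁)) * cbrt ((c₁ * t + c₂) ^ 2) + B)) :
    ∀ t ∈ I, ∀ x : ℝ,
      pdtt F t x + (c₁ / (3 * (c₁ * t + c₂))) * pdt F t x = 0 := by
  intro t ht x
  set E := Real.exp (a * x + b) with hE
  have hfun : (fun s => F (s, x)) =
      fun s => (E * (3 * A / (2 * c₁))) * ((c₁ * s + c₂) ^ 2) ^ ((1:ℝ)/3) + E * B := by
    funext s
    rw [hF, cbrt_sq]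
    ring
  -- first derivative at any point with nonzero u
  have hpdt : ∀ s : ℝ, c₁ * s + c₂ ≠ 0 →
      pdt F s x = (E * A) * ((c₁ * s + c₂) * ((c₁ * s + c₂) ^ 2) ^ (-(2:ℝ)/3)) := by
    intro s hs
    have hd : HasDerivAt (fun s => F (s, x))
        ((E * (3 * A / (2 * c₁))) * (2 * c₁ / 3 * (c₁ * s + c₂) * ((c₁ * s + c₂) ^ 2) ^ (-(2:ℝ)/3))) s := by
      rw [hfun]
      exact ((key c₁ c₂ s hs).const_mul _).add_const _
    rw [pdt, hd.deriv]
    field_simp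
  -- eventually equal near t
  have hopen : IsOpen {s : ℝ | c₁ * s + c₂ ≠ 0} :=
    isOpen_ne.preimage (by continuity)
  have hev : ∀ᶠ s in nhds t, c₁ * s + c₂ ≠ 0 :=
    hopen.mem_nhds (hne t ht)
  have heq : (fun s => pdt F s x) =ᶠ[nhds t]
      (fun s => (E * A) * ((c₁ * s + c₂) * ((c₁ * s + c₂) ^ 2) ^ (-(2:ℝ)/3))) :=
    hev.mono fun s hs => hpdt s hs
  have htne := hne t ht
  have hd2 : HasDerivAt
      (fun s => (E * A) * ((c₁ * s + c₂) * ((c₁ * s + c₂) ^ 2) ^ (-(2:ℝ)/3)))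
      ((E * A) * (-(c₁/3) * ((c₁ * t + c₂) ^ 2) ^ (-(2:ℝ)/3))) t :=
    (key2 c₁ c₂ t htne).const_mul _
  have hpdtt : pdtt F t x = (E * A) * (-(c₁/3) * ((c₁ * t + c₂) ^ 2) ^ (-(2:ℝ)/3)) := by
    rw [pdtt, heq.deriv_eq, hd2.deriv]
  rw [hpdtt, hpdt t htne]
  field_simp
  ring
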